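/- For every integer m ≥ 0, the polynomials S_n(q) = Σ_{k=0}^{⌊n/2⌋} (−1)^k q^{k(k−1)/2} q^{n−k} [n−k choose k]_q satisfy: S_{6m}(q) = q^{6m²+m}, S_{6m+1}(q) = q^{6m²+5m+1}, S_{6m+2}(q) = q^{6m²+5m+1}(q^{2m+1}−1), S_{6m+3}(q) = −q^{6m²+7m+2}, S_{6m+4}(q) = −q^{6m²+11m+5}, and S_{6m+5}(q) = −q^{6m²+11m+5}(q^{2m+2}−1), as identities in the polynomial ring ℤ[q]. -/

import Mathlib

/-- The Gaussian (q-)binomial coefficient `[n choose k]_q ∈ ℤ[q]`, defined through the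
q-Pascal recurrence `[n+1 choose k+1] = [n choose k] + q^{k+1} [n choose k+1]`. -/
noncomputable def qBinom : ℕ → ℕ → Polynomial ℤ
  | _, 0 => 1
  | 0, _ + 1 => 0
  | n + 1, k + 1 => qBinom n k + Polynomial.X ^ (k + 1) * qBinom n (k + 1)

/-- `S_n(q) = ∑_{k=0}^{⌊n/2⌋} (-1)^k q^{k(k-1)/2} q^{n-k} [n-k choose k]_q ∈ ℤ[q]`,
the value of `S_n(a)` at `a = q`. -/
noncomputable def qBinomSumQ (n : ℕ) : Polynomial ℤ :=
  ∑ k ∈ Finset.range (n / 2 + 1),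
    (-1) ^ k * Polynomial.X ^ (k * (k - 1) / 2) * Polynomial.X ^ (n - k) * qBinom (n - k) k

/-!
Both q-Pascal rules, applied to `S_{n+2}(a)` and `S_{n+2}(qa)`, give
`S_{n+2}(a) = a S_{n+1}(a) - a S_n(qa)` and `S_{n+2}(qa) = q^{n+2} a S_{n+1}(a) - q^{n+1} a S_n(a)`.
At `a = 1` the first reads `S_n(q) = S_{n+1}(1) - S_{n+2}(1)`, and substituting this into the second
leaves the recurrence `u_{n+4} = u_{n+3} - q^{n+2} u_{n+1} + q^{n+1} u_n` for `u_n = S_n(1)`.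
Its solution is, block by block of six, `q^{6m²+m}, 0, -q^{6m²+5m+1}, -q^{6m²+7m+2}, 0,
q^{6m²+11m+5}`, which is checked by induction on `m`; differences of consecutive `u` give `S_n(q)`.
-/

open Polynomial Finset

theorem qBinom_zero_right (n : ℕ) : qBinom n 0 = 1 := by
  cases n <;> rfl

theorem qBinom_succ_succ (n k : ℕ) :
    qBinom (n + 1) (k + 1) = qBinom n k + X ^ (k + 1) * qBinom n (k + 1) :=
  rfl

theorem qBinom_of_lt : ∀ {n k : ℕ}, n < k → qBinom n k = 0
  | 0, _ + 1, _ => rfl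
  | n + 1, k + 1, h => by
    rw [qBinom_succ_succ, qBinom_of_lt (by omega), qBinom_of_lt (by omega), mul_zero, add_zero]

/-- The mirror q-Pascal rule `[n+1, k+1] = q^(n-k) [n, k] + [n, k+1]`, multiplied by `q^k` to avoid
truncated subtraction. -/
theorem X_pow_mul_qBinom_succ_succ (n k : ℕ) :
    X ^ k * qBinom (n + 1) (k + 1) = X ^ n * qBinom n k + X ^ k * qBinom n (k + 1) := by
  induction n generalizing k with
  | zero =>
    cases k with
    | zero => simp [qBinom_succ_succ, qBinom_zero_right, qBinom_of_lt]
    | succ k => simp [qBinom_of_lt]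
  | succ n ih =>
    cases k with
    | zero =>
      linear_combination qBinom_succ_succ (n + 1) 0 + X * ih 0 - qBinom_succ_succ n 0
        + (1 - X ^ (n + 1)) * (qBinom_zero_right (n + 1) - qBinom_zero_right n)
    | succ k =>
      linear_combination X ^ (k + 1) * qBinom_succ_succ (n + 1) (k + 1) + X * ih k
        + X ^ (k + 2) * ih (k + 1) - X ^ (n + 1) * qBinom_succ_succ n k
        - X ^ (k + 1) * qBinom_succ_succ n (k + 1)

/-- `S_n(a)`, with the summation index `k` read off the antidiagonal pair `(n - k, k)`. -/
noncomputable def qBinomSum (n : ℕ) (a : ℤ[X]) : ℤ[X] :=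
  ∑ p ∈ antidiagonal n, (-1) ^ p.2 * X ^ p.2.choose 2 * a ^ p.1 * qBinom p.1 p.2

theorem qBinomSum_succ (n : ℕ) (a : ℤ[X]) :
    qBinomSum (n + 1) a = a ^ (n + 1) + ∑ p ∈ antidiagonal n,
      (-1) ^ (p.2 + 1) * X ^ (p.2 + 1).choose 2 * a ^ p.1 * qBinom p.1 (p.2 + 1) := by
  simp [qBinomSum, Nat.sum_antidiagonal_succ', qBinom_zero_right]

theorem qBinomSum_add_two (n : ℕ) (a : ℤ[X]) :
    qBinomSum (n + 2) a = a ^ (n + 2) + ∑ p ∈ antidiagonal n,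
      (-1) ^ (p.2 + 1) * X ^ (p.2 + 1).choose 2 * a ^ (p.1 + 1) * qBinom (p.1 + 1) (p.2 + 1) := by
  rw [qBinomSum, Nat.sum_antidiagonal_succ, qBinom_of_lt (by omega), mul_zero, zero_add]
  simp [Nat.sum_antidiagonal_succ', qBinom_zero_right]

theorem qBinomSum_add_two_eq_sub (n : ℕ) (a : ℤ[X]) :
    qBinomSum (n + 2) a = a * qBinomSum (n + 1) a - a * qBinomSum n (X * a) := by
  rw [qBinomSum_add_two, qBinomSum_succ, qBinomSum, mul_add, mul_sum, mul_sum, add_sub_assoc,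
    ← sum_sub_distrib, pow_succ' a (n + 1)]
  refine congrArg _ (sum_congr rfl fun p _ => ?_)
  rw [Nat.choose_succ_succ', Nat.choose_one_right, pow_add]
  linear_combination (-1) ^ (p.2 + 1) * X ^ p.2.choose 2 * a ^ (p.1 + 1) *
    X_pow_mul_qBinom_succ_succ p.1 p.2

theorem qBinomSum_X_mul_add_two (n : ℕ) (a : ℤ[X]) :
    qBinomSum (n + 2) (X * a) =
      X ^ (n + 2) * a * qBinomSum (n + 1) a - X ^ (n + 1) * a * qBinomSum n a := by
  rw [qBinomSum_add_two, qBinomSum_succ, qBinomSum, mul_add, mul_sum, mul_sum, add_sub_assoc,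
    ← sum_sub_distrib]
  congr 1
  · ring
  refine sum_congr rfl fun p hp => ?_
  obtain rfl : p.1 + p.2 = n := mem_antidiagonal.mp hp
  rw [Nat.choose_succ_succ', Nat.choose_one_right, qBinom_succ_succ]
  ring

theorem qBinomSumQ_eq_qBinomSum (n : ℕ) : qBinomSumQ n = qBinomSum n X := by
  rw [qBinomSum, ← Nat.sum_antidiagonal_swap, Nat.sum_antidiagonal_eq_sum_range_succ_mk]
  refine (sum_congr rfl fun k _ => ?_).trans
    (sum_subset (range_subset_range.2 (by omega)) fun k hk hk' => ?_)
  · simp [Nat.choose_two_right]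
  · simp only [mem_range] at hk hk'
    simp [qBinom_of_lt (by omega : n - k < k)]

theorem qBinomSumQ_eq_sub (n : ℕ) : qBinomSumQ n = qBinomSum (n + 1) 1 - qBinomSum (n + 2) 1 := by
  rw [qBinomSum_add_two_eq_sub, qBinomSumQ_eq_qBinomSum, mul_one]
  ring

theorem qBinomSum_one_add_four (n : ℕ) :
    qBinomSum (n + 4) 1 = qBinomSum (n + 3) 1 - X ^ (n + 2) * qBinomSum (n + 1) 1
      + X ^ (n + 1) * qBinomSum n 1 := by
  have h := qBinomSum_X_mul_add_two n 1
  rw [mul_one, ← qBinomSumQ_eq_qBinomSum, qBinomSumQ_eq_sub] at h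
  linear_combination -h

theorem qBinomSum_one_six_mul_add (m : ℕ) :
    qBinomSum (6 * m + 1) 1 = X ^ (6 * m ^ 2 + m) ∧
    qBinomSum (6 * m + 2) 1 = 0 ∧
    qBinomSum (6 * m + 3) 1 = -X ^ (6 * m ^ 2 + 5 * m + 1) ∧
    qBinomSum (6 * m + 4) 1 = -X ^ (6 * m ^ 2 + 7 * m + 2) ∧
    qBinomSum (6 * m + 5) 1 = 0 ∧
    qBinomSum (6 * m + 6) 1 = X ^ (6 * m ^ 2 + 11 * m + 5) := by
  have step : ∀ {n : ℕ} {a b d : ℤ[X]}, qBinomSum n 1 = a → qBinomSum (n + 1) 1 = b →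
      qBinomSum (n + 3) 1 = d → qBinomSum (n + 4) 1 = d - X ^ (n + 2) * b + X ^ (n + 1) * a :=
    fun ha hb hd => by rw [qBinomSum_one_add_four, ha, hb, hd]
  induction m with
  | zero =>
    have h0 : qBinomSum 0 1 = 1 := by simp [qBinomSum, qBinom_zero_right]
    have h1 : qBinomSum 1 1 = 1 := by simp [qBinomSum_succ, qBinom_of_lt]
    have h2 : qBinomSum 2 1 = 0 := by
      simp [qBinomSum_add_two, qBinom_succ_succ, qBinom_zero_right, qBinom_of_lt]
    have h3 : qBinomSum 3 1 = -X := by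
      simp [qBinomSum_add_two, Nat.sum_antidiagonal_succ, qBinom_succ_succ, qBinom_zero_right,
        qBinom_of_lt]
    have h4 : qBinomSum 4 1 = -X ^ 2 := (step h0 h1 h3).trans (by ring)
    have h5 : qBinomSum 5 1 = 0 := (step h1 h2 h4).trans (by ring)
    exact ⟨h1.trans (by ring), h2, h3.trans (by ring), h4.trans (by ring), h5,
      (step h2 h3 h5).trans (by ring)⟩
  | succ m ih =>
    obtain ⟨-, -, h3, h4, h5, h6⟩ := ih
    have h7 : qBinomSum (6 * m + 7) 1 = X ^ (6 * m ^ 2 + 13 * m + 7) :=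
      (step h3 h4 h6).trans (by ring)
    have h8 : qBinomSum (6 * m + 8) 1 = 0 := (step h4 h5 h7).trans (by ring)
    have h9 : qBinomSum (6 * m + 9) 1 = -X ^ (6 * m ^ 2 + 17 * m + 12) :=
      (step h5 h6 h8).trans (by ring)
    have h10 : qBinomSum (6 * m + 10) 1 = -X ^ (6 * m ^ 2 + 19 * m + 15) :=
      (step h6 h7 h9).trans (by ring)
    have h11 : qBinomSum (6 * m + 11) 1 = 0 := (step h7 h8 h10).trans (by ring)
    have h12 : qBinomSum (6 * m + 12) 1 = X ^ (6 * m ^ 2 + 23 * m + 22) :=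
      (step h8 h9 h11).trans (by ring)
    exact ⟨h7.trans (by ring), h8, h9.trans (by ring), h10.trans (by ring), h11,
      h12.trans (by ring)⟩

/-- 6-periodicity of the q-binomial sums `S_n(q)`: for every `m ≥ 0`,
`S_{6m}(q) = q^{6m²+m}`, `S_{6m+1}(q) = q^{6m²+5m+1}`,
`S_{6m+2}(q) = q^{6m²+5m+1}(q^{2m+1}-1)`, `S_{6m+3}(q) = -q^{6m²+7m+2}`,
`S_{6m+4}(q) = -q^{6m²+11m+5}`, `S_{6m+5}(q) = -q^{6m²+11m+5}(q^{2m+2}-1)` in `ℤ[q]`. -/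
theorem qBinomSumQ_six_periodic (m : ℕ) :
    qBinomSumQ (6 * m) = Polynomial.X ^ (6 * m ^ 2 + m) ∧
    qBinomSumQ (6 * m + 1) = Polynomial.X ^ (6 * m ^ 2 + 5 * m + 1) ∧
    qBinomSumQ (6 * m + 2)
      = Polynomial.X ^ (6 * m ^ 2 + 5 * m + 1) * (Polynomial.X ^ (2 * m + 1) - 1) ∧
    qBinomSumQ (6 * m + 3) = -Polynomial.X ^ (6 * m ^ 2 + 7 * m + 2) ∧
    qBinomSumQ (6 * m + 4) = -Polynomial.X ^ (6 * m ^ 2 + 11 * m + 5) ∧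
    qBinomSumQ (6 * m + 5)
      = -(Polynomial.X ^ (6 * m ^ 2 + 11 * m + 5) * (Polynomial.X ^ (2 * m + 2) - 1)) := by
  obtain ⟨h1, h2, h3, h4, h5, h6⟩ := qBinomSum_one_six_mul_add m
  have h7 : qBinomSum (6 * m + 7) 1 = X ^ (6 * m ^ 2 + 13 * m + 7) :=
    (qBinomSum_one_six_mul_add (m + 1)).1.trans (by ring)
  refine ⟨?_, ?_, ?_, ?_, ?_, ?_⟩ <;> rw [qBinomSumQ_eq_sub]
  · rw [h1, h2]; ring
  · rw [h2, h3]; ring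
  · rw [h3, h4]; ring
  · rw [h4, h5]; ring
  · rw [h5, h6]; ring
  · rw [h6, h7]; ring
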